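/- Craig's formula: for x ≥ 0, Q(x) = (1/π) ∫_0^{π/2} exp(-x²/(2 sin²θ)) dθ, where Q is the standard Gaussian tail function. -/

import Mathlib

/-!
Multiplying `∫_x^∞ e^{-t²/2} dt` by `∫_0^∞ e^{-s²/2} ds = √(2π)/2` gives the Gaussian mass of the
quadrant `(x, ∞) × (0, ∞)`. In polar coordinates, for `x ≥ 0` only the rays with angle
`φ ∈ (0, π/2)` meet the quadrant; such a ray enters it at radius `x / cos φ`, beyond which it
carries mass `∫_{x/cos φ}^∞ r e^{-r²/2} dr = exp (-x² / (2 cos² φ))`. Substituting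
`θ = π/2 - φ` turns the resulting angular integral into Craig's.
-/

open Real MeasureTheory intervalIntegral

/-- The standard Gaussian tail function `Q(x) = (1/√(2π)) ∫_x^∞ exp(-t²/2) dt`. -/
noncomputable def gaussQ (x : ℝ) : ℝ :=
  (Real.sqrt (2 * Real.pi))⁻¹ * ∫ t in Set.Ioi x, Real.exp (-t ^ 2 / 2)

open Set

lemma integrable_exp_neg_sq_div_two : Integrable fun t : ℝ => exp (-t ^ 2 / 2) := by
  simpa [neg_div, div_eq_inv_mul] using integrable_exp_neg_mul_sq (b := 1 / 2) (by norm_num)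

lemma integral_Ioi_zero_exp_neg_sq_div_two :
    ∫ t in Ioi (0 : ℝ), exp (-t ^ 2 / 2) = √(2 * π) / 2 := by
  have h := integral_gaussian_Ioi (1 / 2)
  simp only [neg_mul, one_div, div_inv_eq_mul] at h
  simpa [neg_div, div_eq_inv_mul, mul_comm] using h

lemma integral_Ioi_mul_exp_neg_sq_div_two (c : ℝ) :
    ∫ r in Ioi c, r * exp (-r ^ 2 / 2) = exp (-c ^ 2 / 2) := by
  have hderiv (r : ℝ) : HasDerivAt (fun r => -exp (-r ^ 2 / 2)) (r * exp (-r ^ 2 / 2)) r := by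
    have h : HasDerivAt (fun r : ℝ => -r ^ 2 / 2) (-r) r :=
      ((hasDerivAt_pow 2 r).fun_neg.div_const 2).congr_deriv (by norm_num; ring)
    simpa [mul_comm] using h.exp.fun_neg
  have hint : IntegrableOn (fun r => r * exp (-r ^ 2 / 2)) (Ioi c) := by
    simpa [neg_div, div_eq_inv_mul] using
      (integrable_mul_exp_neg_mul_sq (b := 1 / 2) (by norm_num)).integrableOn
  have hlim : Filter.Tendsto (fun r : ℝ => -exp (-r ^ 2 / 2)) Filter.atTop (nhds (-0)) := by
    refine (tendsto_exp_atBot.comp ?_).neg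
    simpa [neg_div] using
      (Filter.tendsto_pow_atTop two_ne_zero).atTop_div_const (two_pos : (0 : ℝ) < 2)
  rw [integral_Ioi_of_hasDerivAt_of_tendsto' (fun r _ => hderiv r) hint hlim]
  ring

section Polar

variable {E : Type*} [NormedAddCommGroup E] [NormedSpace ℝ E]

lemma integrableOn_polarCoord_target {f : ℝ × ℝ → E} (hf : Integrable f) :
    IntegrableOn (fun p : ℝ × ℝ => p.1 • f (polarCoord.symm p)) polarCoord.target := by
  have h := (integrableOn_image_iff_integrableOn_abs_det_fderiv_smul volume
    polarCoord.open_target.measurableSet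
    (fun p _ => (hasFDerivAt_polarCoord_symm p).hasFDerivWithinAt) polarCoord.symm.injOn f).1
  rw [polarCoord.symm_image_target_eq_source] at h
  refine (h hf.integrableOn).congr_fun (fun p hp => ?_) polarCoord.open_target.measurableSet
  simp only [det_fderivPolarCoordSymm, abs_of_pos (show 0 < p.1 from hp.1)]

lemma integral_eq_integral_Ioo_integral_Ioi_polar {f : ℝ × ℝ → E} (hf : Integrable f) :
    ∫ p, f p = ∫ φ in Ioo (-π) π, ∫ r in Ioi 0, r • f (r * cos φ, r * sin φ) := by
  have h := integrableOn_polarCoord_target hf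
  rw [IntegrableOn, polarCoord_target, Measure.volume_eq_prod, ← Measure.prod_restrict] at h
  rw [← integral_comp_polarCoord_symm, polarCoord_target, Measure.volume_eq_prod,
    ← Measure.prod_restrict, integral_prod_symm _ h]
  rfl

end Polar

noncomputable def quadrantGaussian (x : ℝ) : ℝ × ℝ → ℝ :=
  (Ioi x ×ˢ Ioi 0).indicator fun p => exp (-p.1 ^ 2 / 2) * exp (-p.2 ^ 2 / 2)

lemma integrable_quadrantGaussian (x : ℝ) : Integrable (quadrantGaussian x) :=
  (integrable_exp_neg_sq_div_two.mul_prod integrable_exp_neg_sq_div_two).indicator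
    (measurableSet_Ioi.prod measurableSet_Ioi)

lemma integral_quadrantGaussian (x : ℝ) :
    ∫ p, quadrantGaussian x p = (∫ t in Ioi x, exp (-t ^ 2 / 2)) * (√(2 * π) / 2) := by
  rw [quadrantGaussian, MeasureTheory.integral_indicator (measurableSet_Ioi.prod measurableSet_Ioi),
    Measure.volume_eq_prod,
    setIntegral_prod_mul (fun t => exp (-t ^ 2 / 2)) fun s => exp (-s ^ 2 / 2),
    integral_Ioi_zero_exp_neg_sq_div_two]

lemma quadrantGaussian_polar (x : ℝ) {r φ : ℝ} (hr : 0 < r) (hφ : φ ∈ Ioo 0 (π / 2)) :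
    r • quadrantGaussian x (r * cos φ, r * sin φ)
      = (Ioi (x / cos φ)).indicator (fun r => r * exp (-r ^ 2 / 2)) r := by
  have hcos : 0 < cos φ := cos_pos_of_mem_Ioo ⟨by linarith [hφ.1, pi_pos], hφ.2⟩
  have hsin : 0 < sin φ := sin_pos_of_pos_of_lt_pi hφ.1 (by linarith [hφ.2, pi_pos])
  have hmem : (r * cos φ, r * sin φ) ∈ Ioi x ×ˢ Ioi 0 ↔ r ∈ Ioi (x / cos φ) := by
    simp only [mem_prod, mem_Ioi, div_lt_iff₀ hcos, mul_pos hr hsin, and_true]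
  have hexp : exp (-(r * cos φ) ^ 2 / 2) * exp (-(r * sin φ) ^ 2 / 2) = exp (-r ^ 2 / 2) := by
    rw [← exp_add]
    congr 1
    linear_combination (-r ^ 2 / 2) * sin_sq_add_cos_sq φ
  by_cases h : r ∈ Ioi (x / cos φ)
  · rw [quadrantGaussian, indicator_of_mem (hmem.2 h), indicator_of_mem h, hexp, smul_eq_mul]
  · rw [quadrantGaussian, indicator_of_notMem (mt hmem.1 h), indicator_of_notMem h, smul_zero]

lemma quadrantGaussian_polar_eq_zero {x r φ : ℝ} (hx : 0 ≤ x) (hr : 0 < r)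
    (hφ : φ ∈ Ioo (-π) π \ Ioo 0 (π / 2)) :
    quadrantGaussian x (r * cos φ, r * sin φ) = 0 := by
  refine indicator_of_notMem ?_ _
  rintro ⟨hx_lt, hpos⟩
  rcases le_or_gt φ 0 with hφ0 | hφ0
  · have hsin := sin_nonpos_of_nonpos_of_neg_pi_le hφ0 hφ.1.1.le
    exact (mul_nonpos_of_nonneg_of_nonpos hr.le hsin).not_gt hpos
  · have hcos := cos_nonpos_of_pi_div_two_le_of_le (not_lt.1 fun h => hφ.2 ⟨hφ0, h⟩)
      (by linarith [hφ.1.2, pi_pos])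
    exact (mul_nonpos_of_nonneg_of_nonpos hr.le hcos).not_gt (hx.trans_lt hx_lt)

lemma integral_quadrantGaussian_polar {x φ : ℝ} (hx : 0 ≤ x) (hφ : φ ∈ Ioo 0 (π / 2)) :
    ∫ r in Ioi 0, r • quadrantGaussian x (r * cos φ, r * sin φ)
      = exp (-x ^ 2 / (2 * cos φ ^ 2)) := by
  have hc : 0 ≤ x / cos φ :=
    div_nonneg hx (cos_pos_of_mem_Ioo ⟨by linarith [hφ.1, pi_pos], hφ.2⟩).le
  rw [setIntegral_congr_fun measurableSet_Ioi fun r hr => quadrantGaussian_polar x hr hφ,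
    setIntegral_indicator measurableSet_Ioi, inter_eq_right.2 (Ioi_subset_Ioi hc),
    integral_Ioi_mul_exp_neg_sq_div_two, div_pow]
  ring_nf

lemma integral_quadrantGaussian_eq_integral_angle {x : ℝ} (hx : 0 ≤ x) :
    ∫ p, quadrantGaussian x p = ∫ φ in Ioo 0 (π / 2), exp (-x ^ 2 / (2 * cos φ ^ 2)) := by
  have hsub : Ioo 0 (π / 2) ⊆ Ioo (-π) π :=
    Ioo_subset_Ioo (by linarith [pi_pos]) (by linarith [pi_pos])
  rw [integral_eq_integral_Ioo_integral_Ioi_polar (integrable_quadrantGaussian x),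
    setIntegral_eq_of_subset_of_forall_sdiff_eq_zero measurableSet_Ioo hsub fun φ hφ => ?_]
  · exact setIntegral_congr_fun measurableSet_Ioo fun φ hφ => integral_quadrantGaussian_polar hx hφ
  · refine setIntegral_eq_zero_of_forall_eq_zero fun r hr => ?_
    rw [quadrantGaussian_polar_eq_zero hx hr hφ, smul_zero]

lemma integral_Ioo_zero_pi_div_two_comp_cos (f : ℝ → ℝ) :
    ∫ φ in Ioo 0 (π / 2), f (cos φ) = ∫ θ in (0 : ℝ)..(π / 2), f (sin θ) := by
  rw [← integral_Ioc_eq_integral_Ioo, ← intervalIntegral.integral_of_le (by positivity)]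
  simpa [← sin_pi_div_two_sub] using
    intervalIntegral.integral_comp_sub_left (fun θ => f (sin θ)) (π / 2) (a := 0) (b := π / 2)

/-- Craig's formula: for `x ≥ 0`,
`Q(x) = (1/π) ∫_0^{π/2} exp(-x²/(2 sin²θ)) dθ`. -/
theorem stmt_5 (x : ℝ) (hx : 0 ≤ x) :
    gaussQ x = (1 / Real.pi) *
      ∫ θ in (0 : ℝ)..(Real.pi / 2), Real.exp (-x ^ 2 / (2 * Real.sin θ ^ 2)) := by
  have key : (∫ t in Ioi x, exp (-t ^ 2 / 2)) * (√(2 * π) / 2)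
      = ∫ θ in (0 : ℝ)..(π / 2), exp (-x ^ 2 / (2 * sin θ ^ 2)) := by
    rw [← integral_quadrantGaussian, integral_quadrantGaussian_eq_integral_angle hx,
      integral_Ioo_zero_pi_div_two_comp_cos fun c => exp (-x ^ 2 / (2 * c ^ 2))]
  have hsqrt : √(2 * π) ^ 2 = 2 * π := sq_sqrt (by positivity)
  rw [gaussQ, ← key]
  field_simp
  rw [hsqrt]
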